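/- Let p = 2, so Q(x) = 3/(2·cosh²(x/2)) and φ(x) = tanh(x/2). Suppose a₀ ∈ ℝ and A₀, B₀ : ℝ → ℝ are C^∞ functions, A₀ even and B₀ odd, both of at most polynomial growth (there exist C, m > 0 with |A₀(x)| + |B₀(x)| ≤ C·(1+|x|)^m for all x), satisfying the homogeneous system (L A₀)' + a₀·(3Q − 2Q²)' = 0 and (L B₀)' + 3a₀·Q'' − 3A₀'' − 2Q·A₀ = 0 on ℝ. Then there exist γ, δ ∈ ℝ such that a₀ = (2/3)·γ, A₀ = γ·(1 − (4/3)·Q) and B₀ = −2γ·φ + δ·Q'. Conversely, for any γ, δ ∈ ℝ, the triple (a₀, A₀, B₀) = ((2/3)γ, γ·(1 − (4/3)Q), −2γ·φ + δ·Q') solves this homogeneous system. -/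

import Mathlib

open Real

/-- The soliton profile for `p = 2`. -/
noncomputable def Q2 (x : ℝ) : ℝ := 3 / (2 * Real.cosh (x / 2) ^ 2)

/-- The linearized operator `L` around `Q` for `p = 2`. -/
noncomputable def Lop2 (w : ℝ → ℝ) (x : ℝ) : ℝ :=
  -deriv (deriv w) x + w x - 2 * Q2 x * w x

/-- `φ(x) = tanh(x/2) = -Q'(x)/Q(x)` for `p = 2`. -/
noncomputable def phi2 (x : ℝ) : ℝ := Real.tanh (x / 2)

/-- The homogeneous resonance system `(Ω₀)` for `p = 2`. -/
def SolvesOmega0 (a₀ : ℝ) (A₀ B₀ : ℝ → ℝ) : Prop :=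
  (∀ x : ℝ, deriv (Lop2 A₀) x + a₀ * deriv (fun y => 3 * Q2 y - 2 * Q2 y ^ 2) x = 0) ∧
  (∀ x : ℝ, deriv (Lop2 B₀) x + 3 * a₀ * deriv (deriv Q2) x
      - 3 * deriv (deriv A₀) x - 2 * Q2 x * A₀ x = 0)

noncomputable def th (x : ℝ) : ℝ := Real.tanh (x / 2)

lemma th_eq (x : ℝ) : th x = Real.sinh (x/2) / Real.cosh (x/2) := by
  rw [th, Real.tanh_eq_sinh_div_cosh]

lemma cosh_half_pos (x : ℝ) : 0 < Real.cosh (x/2) := Real.cosh_pos _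

lemma pyth (x : ℝ) : Real.cosh (x/2)^2 - Real.sinh (x/2)^2 = 1 :=
  Real.cosh_sq_sub_sinh_sq _

lemma th_sq_lt_one (x : ℝ) : th x ^ 2 < 1 := by
  rw [th_eq, div_pow, div_lt_one (by positivity)]
  nlinarith [pyth x]

lemma one_sub_th_sq_pos (x : ℝ) : 0 < 1 - th x ^ 2 := by nlinarith [th_sq_lt_one x]

lemma one_sub_th_sq_ne (x : ℝ) : (1:ℝ) - th x ^ 2 ≠ 0 := ne_of_gt (one_sub_th_sq_pos x)

lemma one_sub_th_sq (x : ℝ) : 1 - th x ^ 2 = (Real.cosh (x/2)^2)⁻¹ := by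
  rw [th_eq, div_pow]
  have h := pyth x
  have hc : Real.cosh (x/2)^2 ≠ 0 := by positivity
  field_simp
  exact h

lemma inv_one_sub_th_sq (x : ℝ) : (1 - th x ^ 2)⁻¹ = Real.cosh (x/2)^2 := by
  rw [one_sub_th_sq, inv_inv]

lemma Q2_eq (x : ℝ) : Q2 x = 3/2 * (1 - th x ^ 2) := by
  rw [Q2, one_sub_th_sq]
  have hc : Real.cosh (x/2)^2 ≠ 0 := by positivity
  field_simp

lemma th_zero : th 0 = 0 := by simp [th]

lemma hasDerivAt_th (x : ℝ) : HasDerivAt th ((1 - th x ^ 2)/2) x := by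
  have hc : Real.cosh (x/2) ≠ 0 := ne_of_gt (cosh_half_pos x)
  have h1 : HasDerivAt (fun y : ℝ => y/2) (1/2) x := (hasDerivAt_id x).div_const 2
  have hs : HasDerivAt (fun y : ℝ => Real.sinh (y/2)) (Real.cosh (x/2) * (1/2)) x :=
    by have := (Real.hasDerivAt_sinh (x/2)).comp x h1; exact this
  have hco : HasDerivAt (fun y : ℝ => Real.cosh (y/2)) (Real.sinh (x/2) * (1/2)) x :=
    by have := (Real.hasDerivAt_cosh (x/2)).comp x h1; exact this
  have hdiv := hs.div hco hc
  have hth : th = fun y => Real.sinh (y/2) / Real.cosh (y/2) := funext fun y => th_eq y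
  rw [hth]
  refine hdiv.congr_deriv ?_
  have h := pyth x
  field_simp
noncomputable def dQ (x : ℝ) : ℝ := 3/2*th x^3 - 3/2*th x
noncomputable def ddQ (x : ℝ) : ℝ := -3/4 + 3*th x^2 - 9/4*th x^4
noncomputable def dddQ (x : ℝ) : ℝ := 3*th x - 15/2*th x^3 + 9/2*th x^5
noncomputable def ef (x : ℝ) : ℝ :=
  (1 - th x^2)⁻¹ + 15/2*th x^2 - 5 + 15/4*x*(th x - th x^3)
noncomputable def def' (x : ℝ) : ℝ :=
  th x*(1 - th x^2)⁻¹ + 45/4*(th x - th x^3) + x*(15/8 - 15/2*th x^2 + 45/8*th x^4)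
noncomputable def Pc (x : ℝ) : ℝ := 3*th x^2 - 2 + 3/2*x*(th x - th x^3)
noncomputable def Pa (x : ℝ) : ℝ := 3/2 - 3/2*th x^2 - 9/4*x*(th x - th x^3)
noncomputable def dPc (x : ℝ) : ℝ := 9/2*(th x - th x^3) + x*(3/4 - 3*th x^2 + 9/4*th x^4)
noncomputable def dPa (x : ℝ) : ℝ := -15/4*(th x - th x^3) + x*(-9/8 + 9/2*th x^2 - 27/8*th x^4)
noncomputable def Wc (x : ℝ) : ℝ :=
  1/2*th x*(1 - th x^2)⁻¹ - 3/2*th x + 3/2*x*(1 - th x^2) - 9/8*x^2*(th x - th x^3)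
noncomputable def Wa (x : ℝ) : ℝ :=
  -3/4*th x*(1 - th x^2)⁻¹ - 3/4*th x - 9/4*x*(1 - th x^2) + 27/16*x^2*(th x - th x^3)
noncomputable def dWc (x : ℝ) : ℝ :=
  1/2*(1 - th x^2)⁻¹ + 1/2 - 3/4*th x^2 - 15/4*x*(th x - th x^3)
    + x^2*(-9/16 + 9/4*th x^2 - 27/16*th x^4)
noncomputable def dWa (x : ℝ) : ℝ :=
  -3/4*(1 - th x^2)⁻¹ - 9/4 + 21/8*th x^2 + 45/8*x*(th x - th x^3)
    + x^2*(27/32 - 27/8*th x^2 + 81/32*th x^4)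
noncomputable def Gc (x : ℝ) : ℝ := 6*th x - 9*th x^3 - 9/2*x*(th x^2 - th x^4)
noncomputable def Ga (x : ℝ) : ℝ := -9/2*th x + 6*th x^3 + 27/4*x*(th x^2 - th x^4)

section derivs
variable (x : ℝ)

private lemma hth2 : HasDerivAt (fun y => th y^2) (2*th x*((1 - th x^2)/2)) x := by
  exact ((hasDerivAt_th x).pow 2).congr_deriv (by norm_num)

private lemma hth3 : HasDerivAt (fun y => th y^3) (3*th x^2*((1 - th x^2)/2)) x := by
  exact ((hasDerivAt_th x).pow 3).congr_deriv (by norm_num)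

private lemma hth4 : HasDerivAt (fun y => th y^4) (4*th x^3*((1 - th x^2)/2)) x := by
  exact ((hasDerivAt_th x).pow 4).congr_deriv (by norm_num)

private lemma hth5 : HasDerivAt (fun y => th y^5) (5*th x^4*((1 - th x^2)/2)) x := by
  exact ((hasDerivAt_th x).pow 5).congr_deriv (by norm_num)

private lemma hinv :
    HasDerivAt (fun y => (1 - th y^2)⁻¹) (th x * (1 - th x^2)⁻¹) x := by
  have h := ((hasDerivAt_const x (1:ℝ)).sub (hth2 x)).inv (one_sub_th_sq_ne x)
  refine h.congr_deriv ?_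
  simp only [Pi.sub_apply]
  have hne := one_sub_th_sq_ne x
  field_simp
  ring

lemma hasDerivAt_Q2 : HasDerivAt Q2 (dQ x) x := by
  have hQ : Q2 = fun y => 3/2*(1 - th y^2) := funext Q2_eq
  rw [hQ]
  have H := ((hasDerivAt_const x (1:ℝ)).sub (hth2 x)).const_mul (3/2)
  refine H.congr_deriv ?_; unfold dQ; ring

lemma hasDerivAt_dQ : HasDerivAt dQ (ddQ x) x := by
  unfold dQ
  have H := ((hth3 x).const_mul (3/2)).sub ((hasDerivAt_th x).const_mul (3/2))
  refine H.congr_deriv ?_; unfold ddQ; ring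

lemma hasDerivAt_ddQ : HasDerivAt ddQ (dddQ x) x := by
  unfold ddQ
  have H := (((hasDerivAt_const x (-3/4:ℝ)).add ((hth2 x).const_mul 3)).sub
    ((hth4 x).const_mul (9/4)))
  refine H.congr_deriv ?_; unfold dddQ; ring

lemma dddQ_eq : dddQ x = (1 - 2*Q2 x) * dQ x := by
  rw [Q2_eq]; unfold dddQ dQ; ring

lemma hasDerivAt_ef : HasDerivAt ef (def' x) x := by
  unfold ef
  have hsub : HasDerivAt (fun y => th y - th y^3)
      ((1 - th x^2)/2 - 3*th x^2*((1 - th x^2)/2)) x := (hasDerivAt_th x).sub (hth3 x)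
  have hx : HasDerivAt (fun y => 15/4*y*(th y - th y^3))
      ((15/4*1)*(th x - th x^3) + (15/4*x)*((1 - th x^2)/2 - 3*th x^2*((1 - th x^2)/2))) x :=
    ((hasDerivAt_id x).const_mul (15/4)).mul hsub
  have H := (((hinv x).add ((hth2 x).const_mul (15/2))).sub
    (hasDerivAt_const x (5:ℝ))).add hx
  refine H.congr_deriv ?_
  unfold def'
  have hne := one_sub_th_sq_ne x
  field_simp
  ring

lemma hasDerivAt_def' : HasDerivAt def' ((1 - 2*Q2 x) * ef x) x := by
  unfold def'
  have hmul : HasDerivAt (fun y => th y*(1 - th y^2)⁻¹)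
      (((1 - th x^2)/2)*(1 - th x^2)⁻¹ + th x*(th x * (1 - th x^2)⁻¹)) x :=
    (hasDerivAt_th x).mul (hinv x)
  have hsub : HasDerivAt (fun y => th y - th y^3)
      ((1 - th x^2)/2 - 3*th x^2*((1 - th x^2)/2)) x := (hasDerivAt_th x).sub (hth3 x)
  have hpoly : HasDerivAt (fun y => 15/8 - 15/2*th y^2 + 45/8*th y^4)
      (0 - 15/2*(2*th x*((1 - th x^2)/2)) + 45/8*(4*th x^3*((1 - th x^2)/2))) x :=
    (((hasDerivAt_const x (15/8:ℝ)).sub ((hth2 x).const_mul (15/2))).add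
      ((hth4 x).const_mul (45/8)))
  have hx : HasDerivAt (fun y => y*(15/8 - 15/2*th y^2 + 45/8*th y^4))
      (1*(15/8 - 15/2*th x^2 + 45/8*th x^4) +
        x*(0 - 15/2*(2*th x*((1 - th x^2)/2)) + 45/8*(4*th x^3*((1 - th x^2)/2)))) x :=
    (hasDerivAt_id x).mul hpoly
  have H := (hmul.add (hsub.const_mul (45/4))).add hx
  refine H.congr_deriv ?_
  rw [Q2_eq]; unfold ef
  have hne := one_sub_th_sq_ne x
  field_simp
  ring

end derivs
section derivs2
variable (x : ℝ)

private lemma hsubt : HasDerivAt (fun y => th y - th y^3)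
    ((1 - th x^2)/2 - 3*th x^2*((1 - th x^2)/2)) x := (hasDerivAt_th x).sub (hth3 x)

private lemma hsubt2 : HasDerivAt (fun y => th y^2 - th y^4)
    (2*th x*((1 - th x^2)/2) - 4*th x^3*((1 - th x^2)/2)) x := (hth2 x).sub (hth4 x)

lemma hasDerivAt_Pc : HasDerivAt Pc (dPc x) x := by
  unfold Pc
  have H := (((hth2 x).const_mul 3).sub (hasDerivAt_const x (2:ℝ))).add
    ((((hasDerivAt_id x).const_mul (3/2)).mul (hsubt x)))
  refine H.congr_deriv ?_
  unfold dPc; simp only [id_eq]; ring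

lemma hasDerivAt_dPc : HasDerivAt dPc ((1 - 2*Q2 x)*Pc x - 1) x := by
  unfold dPc
  have hpoly : HasDerivAt (fun y => 3/4 - 3*th y^2 + 9/4*th y^4)
      (0 - 3*(2*th x*((1 - th x^2)/2)) + 9/4*(4*th x^3*((1 - th x^2)/2))) x :=
    ((hasDerivAt_const x (3/4:ℝ)).sub ((hth2 x).const_mul 3)).add ((hth4 x).const_mul (9/4))
  have H := ((hsubt x).const_mul (9/2)).add ((hasDerivAt_id x).mul hpoly)
  refine H.congr_deriv ?_
  rw [Q2_eq]; unfold Pc; simp only [id_eq]; ring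

lemma hasDerivAt_Pa : HasDerivAt Pa (dPa x) x := by
  unfold Pa
  have H := ((hasDerivAt_const x (3/2:ℝ)).sub ((hth2 x).const_mul (3/2))).sub
    ((((hasDerivAt_id x).const_mul (9/4)).mul (hsubt x)))
  refine H.congr_deriv ?_
  unfold dPa; simp only [id_eq]; ring

lemma hasDerivAt_dPa : HasDerivAt dPa ((1 - 2*Q2 x)*Pa x - (-3*Q2 x + 2*Q2 x^2)) x := by
  unfold dPa
  have hpoly : HasDerivAt (fun y => -9/8 + 9/2*th y^2 - 27/8*th y^4)
      (0 + 9/2*(2*th x*((1 - th x^2)/2)) - 27/8*(4*th x^3*((1 - th x^2)/2))) x :=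
    ((hasDerivAt_const x (-9/8:ℝ)).add ((hth2 x).const_mul (9/2))).sub ((hth4 x).const_mul (27/8))
  have H := ((hsubt x).const_mul (-15/4)).add ((hasDerivAt_id x).mul hpoly)
  refine H.congr_deriv ?_
  rw [Q2_eq]; unfold Pa; simp only [id_eq]; ring

lemma hasDerivAt_Wc : HasDerivAt Wc (dWc x) x := by
  unfold Wc
  have H := (((((hasDerivAt_th x).const_mul (1/2)).mul (hinv x)).sub
      ((hasDerivAt_th x).const_mul (3/2))).add
      (((hasDerivAt_id x).const_mul (3/2)).mul ((hasDerivAt_const x (1:ℝ)).sub (hth2 x)))).sub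
      (((hasDerivAt_pow 2 x).const_mul (9/8)).mul (hsubt x))
  refine H.congr_deriv ?_
  simp only [Pi.sub_apply, id_eq]
  unfold dWc
  have hne := one_sub_th_sq_ne x
  push_cast
  field_simp
  ring

lemma hasDerivAt_dWc : HasDerivAt dWc ((1 - 2*Q2 x)*Wc x - Gc x) x := by
  unfold dWc
  have hpoly : HasDerivAt (fun y => -9/16 + 9/4*th y^2 - 27/16*th y^4)
      (0 + 9/4*(2*th x*((1 - th x^2)/2)) - 27/16*(4*th x^3*((1 - th x^2)/2))) x :=
    ((hasDerivAt_const x (-9/16:ℝ)).add ((hth2 x).const_mul (9/4))).sub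
      ((hth4 x).const_mul (27/16))
  have H := (((((hinv x).const_mul (1/2)).add (hasDerivAt_const x (1/2:ℝ))).sub
      ((hth2 x).const_mul (3/4))).sub
      (((hasDerivAt_id x).const_mul (15/4)).mul (hsubt x))).add
      ((hasDerivAt_pow 2 x).mul hpoly)
  refine H.congr_deriv ?_
  simp only [Pi.sub_apply, id_eq]
  rw [Q2_eq]; unfold Wc Gc
  have hne := one_sub_th_sq_ne x
  push_cast
  field_simp
  ring

lemma hasDerivAt_Wa : HasDerivAt Wa (dWa x) x := by
  unfold Wa
  have H := (((((hasDerivAt_th x).const_mul (-3/4)).mul (hinv x)).sub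
      ((hasDerivAt_th x).const_mul (3/4))).sub
      (((hasDerivAt_id x).const_mul (9/4)).mul ((hasDerivAt_const x (1:ℝ)).sub (hth2 x)))).add
      (((hasDerivAt_pow 2 x).const_mul (27/16)).mul (hsubt x))
  refine H.congr_deriv ?_
  simp only [Pi.sub_apply, id_eq]
  unfold dWa
  have hne := one_sub_th_sq_ne x
  push_cast
  field_simp
  ring

lemma hasDerivAt_dWa : HasDerivAt dWa ((1 - 2*Q2 x)*Wa x - Ga x) x := by
  unfold dWa
  have hpoly : HasDerivAt (fun y => 27/32 - 27/8*th y^2 + 81/32*th y^4)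
      (0 - 27/8*(2*th x*((1 - th x^2)/2)) + 81/32*(4*th x^3*((1 - th x^2)/2))) x :=
    ((hasDerivAt_const x (27/32:ℝ)).sub ((hth2 x).const_mul (27/8))).add
      ((hth4 x).const_mul (81/32))
  have H := (((((hinv x).const_mul (-3/4)).sub (hasDerivAt_const x (9/4:ℝ))).add
      ((hth2 x).const_mul (21/8))).add
      (((hasDerivAt_id x).const_mul (45/8)).mul (hsubt x))).add
      ((hasDerivAt_pow 2 x).mul hpoly)
  refine H.congr_deriv ?_
  simp only [Pi.sub_apply, id_eq]
  rw [Q2_eq]; unfold Wa Ga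
  have hne := one_sub_th_sq_ne x
  push_cast
  field_simp
  ring

lemma hasDerivAt_Gc :
    HasDerivAt Gc (3*((1 - 2*Q2 x)*Pc x - 1) + 2*Q2 x*Pc x) x := by
  unfold Gc
  have H := (((hasDerivAt_th x).const_mul 6).sub ((hth3 x).const_mul 9)).sub
    (((hasDerivAt_id x).const_mul (9/2)).mul (hsubt2 x))
  refine H.congr_deriv ?_
  rw [Q2_eq]; unfold Pc; simp only [id_eq]; ring

lemma hasDerivAt_Ga :
    HasDerivAt Ga (-3*ddQ x + 3*((1 - 2*Q2 x)*Pa x - (-3*Q2 x + 2*Q2 x^2)) + 2*Q2 x*Pa x) x := by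
  unfold Ga
  have H := (((hasDerivAt_th x).const_mul (-9/2)).add ((hth3 x).const_mul 6)).add
    (((hasDerivAt_id x).const_mul (27/4)).mul (hsubt2 x))
  refine H.congr_deriv ?_
  rw [Q2_eq]; unfold Pa ddQ; simp only [id_eq]; ring

lemma hasDerivAt_phi2 : HasDerivAt phi2 ((1 - th x^2)/2) x := hasDerivAt_th x

end derivs2

section values

lemma ef_zero : ef 0 = -4 := by simp [ef, th_zero]; norm_num
lemma def'_zero : def' 0 = 0 := by simp [def', th_zero]
lemma Pc_zero : Pc 0 = -2 := by simp [Pc, th_zero]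
lemma Pa_zero : Pa 0 = 3/2 := by simp [Pa, th_zero]
lemma dPc_zero : dPc 0 = 0 := by simp [dPc, th_zero]
lemma dPa_zero : dPa 0 = 0 := by simp [dPa, th_zero]
lemma Wc_zero : Wc 0 = 0 := by simp [Wc, th_zero]
lemma Wa_zero : Wa 0 = 0 := by simp [Wa, th_zero]
lemma dQ_zero : dQ 0 = 0 := by simp [dQ, th_zero]
lemma dWc_zero : dWc 0 = 1 := by simp [dWc, th_zero]; norm_num
lemma dWa_zero : dWa 0 = -3 := by simp [dWa, th_zero]; norm_num
lemma ddQ_zero : ddQ 0 = -3/4 := by simp [ddQ, th_zero]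
lemma Gc_zero : Gc 0 = 0 := by simp [Gc, th_zero]
lemma Ga_zero : Ga 0 = 0 := by simp [Ga, th_zero]

end values
section tools

open Filter Topology Set

lemma Q2_pos (t : ℝ) : 0 < Q2 t := by unfold Q2; positivity

lemma Q2_le (t : ℝ) : Q2 t ≤ 3/2 := by
  rw [Q2_eq]; nlinarith [th_sq_lt_one t, sq_nonneg (th t)]

lemma ode_unique (w w' : ℝ → ℝ) (hw : ∀ x, HasDerivAt w (w' x) x)
    (hw' : ∀ x, HasDerivAt w' ((1 - 2*Q2 x) * w x) x)
    (h0 : w 0 = 0) (h0' : w' 0 = 0) : ∀ x, w x = 0 := by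
  set v : ℝ → ℝ × ℝ → ℝ × ℝ := fun t p => (p.2, (1 - 2*Q2 t) * p.1) with hv_def
  have hlip : ∀ t, LipschitzWith 3 (v t) := by
    intro t
    apply LipschitzWith.of_dist_le_mul
    intro p q
    have hq : |1 - 2*Q2 t| ≤ 3 := by
      have h1 := Q2_pos t; have h2 := Q2_le t
      rw [abs_le]; constructor <;> linarith
    have habs : |(1 - 2*Q2 t) * p.1 - (1 - 2*Q2 t) * q.1| = |1 - 2*Q2 t| * |p.1 - q.1| := by
      rw [← abs_mul]; ring_nf
    have h1 : |p.1 - q.1| ≤ max |p.1 - q.1| |p.2 - q.2| := le_max_left _ _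
    have h2 : |p.2 - q.2| ≤ max |p.1 - q.1| |p.2 - q.2| := le_max_right _ _
    have h3 : (0:ℝ) ≤ |p.1 - q.1| := abs_nonneg _
    rw [Prod.dist_eq, Prod.dist_eq]
    simp only [hv_def, Real.dist_eq]
    have hco : ((3 : NNReal) : ℝ) = 3 := by norm_num
    rw [hco]
    apply max_le
    · calc |p.2 - q.2| ≤ max |p.1 - q.1| |p.2 - q.2| := h2
        _ ≤ 3 * max |p.1 - q.1| |p.2 - q.2| := by
            nlinarith [le_trans h3 h1, abs_nonneg (p.2 - q.2)]
    · calc |(1 - 2*Q2 t) * p.1 - (1 - 2*Q2 t) * q.1| = |1 - 2*Q2 t| * |p.1 - q.1| := habs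
        _ ≤ 3 * |p.1 - q.1| := by nlinarith [abs_nonneg (p.1 - q.1)]
        _ ≤ 3 * max |p.1 - q.1| |p.2 - q.2| := by nlinarith [h1]
  intro x
  set f : ℝ → ℝ × ℝ := fun s => (w s, w' s) with hf_def
  set g : ℝ → ℝ × ℝ := fun _ => ((0:ℝ), (0:ℝ)) with hg_def
  have hfd : ∀ t : ℝ, HasDerivAt f (v t (f t)) t := fun t => (hw t).prodMk (hw' t)
  have hgd : ∀ t : ℝ, HasDerivAt g (v t (g t)) t := by
    intro t
    have : v t (g t) = ((0:ℝ), (0:ℝ)) := by simp [hv_def, hg_def]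
    rw [this]
    exact hasDerivAt_const t _
  have hcf : Continuous f := by
    rw [continuous_iff_continuousAt]; intro s
    exact ((hw s).continuousAt.prodMk (hw' s).continuousAt)
  have heq : f 0 = g 0 := by simp [hf_def, hg_def, h0, h0']
  have hx1 : x ∈ Icc (-(|x|+1)) (|x|+1) := by
    constructor
    · nlinarith [neg_abs_le x, abs_nonneg x]
    · nlinarith [le_abs_self x]
  have ht0 : (0:ℝ) ∈ Ioo (-(|x|+1)) (|x|+1) := by
    constructor <;> nlinarith [abs_nonneg x]
  have main := ODE_solution_unique_of_mem_Icc
    (v := v) (s := fun _ => Set.univ) (K := 3)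
    (fun t _ => (hlip t).lipschitzOnWith) ht0
    (hcf.continuousOn) (fun t _ => hfd t) (fun _ _ => trivial)
    (continuous_const.continuousOn) (fun t _ => hgd t) (fun _ _ => trivial) heq
  have := main hx1
  have := congrArg Prod.fst this
  simpa [hf_def, hg_def] using this

lemma growth_aux {ν D : ℝ} {n : ℕ}
    (h : ∀ x : ℝ, 1 ≤ x → |ν| * Real.exp x ≤ D * (1+x)^n) : ν = 0 := by
  by_contra hν
  have habs : 0 < |ν| := abs_pos.mpr hν
  have key : Tendsto (fun x : ℝ => D * (1+x)^n * Real.exp (-x)) atTop (nhds 0) := by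
    have h0 := Real.tendsto_pow_mul_exp_neg_atTop_nhds_zero n
    have h1 : Tendsto (fun x : ℝ => 1+x) atTop atTop :=
      tendsto_atTop_add_const_left _ 1 tendsto_id
    have h2 := (h0.comp h1).const_mul (D * Real.exp 1)
    have hfe : (fun x : ℝ => D * (1+x)^n * Real.exp (-x)) =
        fun x : ℝ => (D * Real.exp 1) * ((fun y : ℝ => y^n * Real.exp (-y)) (1+x)) := by
      funext y
      simp only []
      rw [show -y = 1 + -(1+y) by ring, Real.exp_add]
      ring
    rw [hfe]
    simpa using h2
  have hle : ∀ᶠ x in atTop, |ν| ≤ D * (1+x)^n * Real.exp (-x) := by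
    rw [eventually_atTop]
    refine ⟨1, fun x hx => ?_⟩
    have h2 := h x hx
    have h3 : |ν| = |ν| * Real.exp x * Real.exp (-x) := by
      rw [mul_assoc, ← Real.exp_add]; simp
    rw [h3]
    exact mul_le_mul_of_nonneg_right h2 (Real.exp_pos _).le
  have hfin : |ν| ≤ 0 := ge_of_tendsto key hle
  linarith

lemma even_deriv_neg {f : ℝ → ℝ} (h : ∀ x, f (-x) = f x) (x : ℝ) :
    deriv f (-x) = - deriv f x := by
  have h1 : (fun y => f (-y)) = f := funext h
  have h2 := deriv_comp_neg (f := f) (x := x)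
  rw [h1] at h2
  linarith

lemma even_deriv_zero {f : ℝ → ℝ} (h : ∀ x, f (-x) = f x) : deriv f 0 = 0 := by
  have := even_deriv_neg h 0
  simp at this
  linarith

lemma odd_deriv_even {f : ℝ → ℝ} (h : ∀ x, f (-x) = -f x) (x : ℝ) :
    deriv f (-x) = deriv f x := by
  have h1 : (fun y => f (-y)) = fun y => -f y := funext h
  have h2 := deriv_comp_neg (f := f) (x := x)
  rw [h1] at h2
  rw [deriv.fun_neg] at h2
  linarith

lemma th_abs_le (x : ℝ) : |th x| ≤ 1 := by
  have := th_sq_lt_one x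
  rw [abs_le]; constructor <;> nlinarith

lemma th_nonneg {x : ℝ} (hx : 0 ≤ x) : 0 ≤ th x := by
  rw [th_eq]
  have h1 : 0 ≤ Real.sinh (x/2) := Real.sinh_nonneg_iff.mpr (by linarith)
  exact div_nonneg h1 (cosh_half_pos x).le

lemma cosh_sq_ge (x : ℝ) : Real.exp x / 4 ≤ Real.cosh (x/2)^2 := by
  have h1 : Real.cosh (x/2) = (Real.exp (x/2) + Real.exp (-(x/2)))/2 := Real.cosh_eq _
  have h2 : 0 < Real.exp (x/2) := Real.exp_pos _
  have h3 : 0 < Real.exp (-(x/2)) := Real.exp_pos _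
  have h4 : Real.exp (x/2) * Real.exp (x/2) = Real.exp x := by
    rw [← Real.exp_add]; norm_num
  nlinarith

lemma sinh_ge {x : ℝ} (hx : 0 ≤ x) : (Real.exp x - 1)/2 ≤ Real.sinh x := by
  rw [Real.sinh_eq]
  have : Real.exp (-x) ≤ 1 := by
    rw [Real.exp_le_one_iff]; linarith
  linarith

lemma th_inv_eq_sinh (x : ℝ) : th x * (1 - th x^2)⁻¹ = Real.sinh x / 2 := by
  rw [inv_one_sub_th_sq, th_eq]
  have hc : Real.cosh (x/2) ≠ 0 := ne_of_gt (cosh_half_pos x)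
  have h2 : Real.sinh x = 2 * Real.sinh (x/2) * Real.cosh (x/2) := by
    have := Real.sinh_two_mul (x/2)
    rw [show 2*(x/2) = x by ring] at this
    exact this
  rw [h2]
  field_simp

end tools
section converse

lemma phi2_eq_th (y : ℝ) : phi2 y = th y := rfl

lemma deriv_Q2_eq : deriv Q2 = dQ := funext fun y => (hasDerivAt_Q2 y).deriv

lemma converse_part (γ δ : ℝ) : SolvesOmega0 (2/3*γ)
    (fun x => γ*(1 - 4/3*Q2 x)) (fun x => -2*γ*phi2 x + δ*deriv Q2 x) := by
  have hdA : ∀ y, HasDerivAt (fun z => γ*(1 - 4/3*Q2 z)) (-(4/3*γ*dQ y)) y := by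
    intro y
    have h := ((hasDerivAt_const y (1:ℝ)).sub ((hasDerivAt_Q2 y).const_mul (4/3))).const_mul γ
    refine h.congr_deriv ?_; ring
  have hderivA : deriv (fun z => γ*(1 - 4/3*Q2 z)) = fun y => -(4/3*γ*dQ y) :=
    funext fun y => (hdA y).deriv
  have hd2A : ∀ y, HasDerivAt (fun z => -(4/3*γ*dQ z)) (-(4/3*γ*ddQ y)) y := by
    intro y
    have h := (((hasDerivAt_dQ y).const_mul (4/3*γ))).neg
    exact h
  have hderiv2A : ∀ y, deriv (deriv (fun z => γ*(1 - 4/3*Q2 z))) y = -(4/3*γ*ddQ y) := by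
    intro y; rw [hderivA]; exact (hd2A y).deriv
  have hdB : ∀ y, HasDerivAt (fun z => -2*γ*phi2 z + δ*deriv Q2 z)
      (-(2*γ*((1 - th y^2)/2)) + δ*ddQ y) y := by
    intro y
    rw [deriv_Q2_eq]
    have h := (((hasDerivAt_phi2 y).const_mul (2*γ)).neg).add ((hasDerivAt_dQ y).const_mul δ)
    refine h.congr_of_eventuallyEq (Filter.Eventually.of_forall fun z => ?_)
    simp only [Pi.add_apply, Pi.neg_apply]; ring
  have hderivB : deriv (fun z => -2*γ*phi2 z + δ*deriv Q2 z)
      = fun y => -(2*γ*((1 - th y^2)/2)) + δ*ddQ y := funext fun y => (hdB y).deriv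
  have hd2B : ∀ y, HasDerivAt (fun z => -(2*γ*((1 - th z^2)/2)) + δ*ddQ z)
      (γ*(th y*(1 - th y^2)) + δ*dddQ y) y := by
    intro y
    have h := ((((hasDerivAt_const y (1:ℝ)).sub (hth2 y)).div_const 2).const_mul
      (2*γ)).neg.add ((hasDerivAt_ddQ y).const_mul δ)
    refine h.congr_deriv ?_
    ring
  have hderiv2B : ∀ y, deriv (deriv (fun z => -2*γ*phi2 z + δ*deriv Q2 z)) y
      = γ*(th y*(1 - th y^2)) + δ*dddQ y := by
    intro y; rw [hderivB]; exact (hd2B y).deriv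
  constructor
  · intro x
    have hLA : Lop2 (fun z => γ*(1 - 4/3*Q2 z)) = fun y => γ - 2/3*γ*(3*Q2 y - 2*Q2 y^2) := by
      funext y
      simp only [Lop2]
      rw [hderiv2A y]
      simp only [Q2_eq]
      unfold ddQ
      ring
    rw [hLA]
    have hg : HasDerivAt (fun y => 3*Q2 y - 2*Q2 y^2) (3*dQ x - 2*(2*Q2 x*dQ x)) x := by
      have h := hasDerivAt_Q2 x
      have h2 := (h.const_mul 3).sub (((h.pow 2)).const_mul 2)
      refine h2.congr_deriv ?_
      push_cast; ring
    have h1 : HasDerivAt (fun y => γ - 2/3*γ*(3*Q2 y - 2*Q2 y^2))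
        (0 - 2/3*γ*(3*dQ x - 2*(2*Q2 x*dQ x))) x :=
      (hasDerivAt_const x γ).sub (hg.const_mul (2/3*γ))
    rw [h1.deriv, hg.deriv]
    ring
  · intro x
    have hLB : Lop2 (fun z => -2*γ*phi2 z + δ*deriv Q2 z)
        = fun y => -(2*γ*th y) - 10/3*γ*dQ y := by
      funext y
      simp only [Lop2]
      rw [hderiv2B y, deriv_Q2_eq]
      simp only [phi2_eq_th, Q2_eq]
      unfold dddQ dQ
      ring
    rw [hLB]
    have h1 : HasDerivAt (fun y => -(2*γ*th y) - 10/3*γ*dQ y)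
        (-(2*γ*((1 - th x^2)/2)) - 10/3*γ*ddQ x) x :=
      (((hasDerivAt_th x).const_mul (2*γ)).neg).sub ((hasDerivAt_dQ x).const_mul (10/3*γ))
    rw [h1.deriv, deriv_Q2_eq, (hasDerivAt_dQ x).deriv, hderiv2A x]
    simp only [Q2_eq]
    unfold ddQ
    ring

end converse
section mainaux

lemma abs_sub' (a b : ℝ) : |a - b| ≤ |a| + |b| := by
  rw [sub_eq_add_neg]
  exact (abs_add_le _ _).trans (by rw [abs_neg])

lemma abs_t3_le (x : ℝ) : |th x - th x^3| ≤ 1 := by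
  obtain ⟨h1, h2⟩ := abs_le.mp (th_abs_le x)
  have hp : (0:ℝ) ≤ 1 - th x^2 := (one_sub_th_sq_pos x).le
  have q1 : 0 ≤ (1 - th x) * (1 - th x^2) := mul_nonneg (by linarith) hp
  have q2 : 0 ≤ (1 + th x) * (1 - th x^2) := mul_nonneg (by linarith) hp
  rw [abs_le]
  constructor <;> nlinarith [q1, q2, hp]

lemma abs_dQ_le (x : ℝ) : |dQ x| ≤ 3 := by
  unfold dQ
  obtain ⟨h1, h2⟩ := abs_le.mp (th_abs_le x)
  have hp : (0:ℝ) ≤ 1 - th x^2 := (one_sub_th_sq_pos x).le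
  have q1 : 0 ≤ (1 - th x) * (1 - th x^2) := mul_nonneg (by linarith) hp
  have q2 : 0 ≤ (1 + th x) * (1 - th x^2) := mul_nonneg (by linarith) hp
  rw [abs_le]
  constructor <;> nlinarith [q1, q2, hp]

lemma one_le_pow1x {x : ℝ} (hx : 1 ≤ x) (n : ℕ) : 1 ≤ (1+x)^n :=
  one_le_pow₀ (by linarith)

lemma x_le_pow1x {x : ℝ} (hx : 1 ≤ x) {n : ℕ} (hn : 1 ≤ n) : x ≤ (1+x)^n := by
  have h1 : (1+x) ≤ (1+x)^n := le_self_pow₀ (by linarith) (by omega)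
  linarith

lemma xsq_le_pow1x {x : ℝ} (hx : 1 ≤ x) {n : ℕ} (hn : 2 ≤ n) : x^2 ≤ (1+x)^n := by
  have h1 : (1+x)^2 ≤ (1+x)^n := pow_le_pow_right₀ (by linarith) hn
  nlinarith

end mainaux

set_option maxHeartbeats 1000000 in
lemma growth_stepA (C cst a₀ ν : ℝ) (n : ℕ) (hC : 0 < C) (hn1 : 1 ≤ n) (A₀ : ℝ → ℝ)
  (hAbound : ∀ x : ℝ, 1 ≤ x → |A₀ x| ≤ C * (1+x)^n)
  (hAeq : ∀ y, A₀ y = cst * Pc y + a₀ * Pa y + ν * ef y) : ν = 0 := by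
  apply growth_aux (D := 4*C + (8*|cst| + 6*|a₀| + 50*|ν|) + (6*|cst| + 9*|a₀| + 15*|ν|))
    (n := n)
  intro x hx
  have hx0 : (0:ℝ) ≤ x := by linarith
  have htt : |th x - th x^3| ≤ 1 := abs_t3_le x
  have ht2 := abs_le.mp (th_abs_le x)
  have hcosh := cosh_sq_ge x
  have hinvpos : (0:ℝ) < (1 - th x^2)⁻¹ := inv_pos.mpr (one_sub_th_sq_pos x)
  have hxt := abs_le.mp htt
  -- pole extraction
  have e2 : ν * (1 - th x^2)⁻¹
      = ν * ef x - ν * (15/2*th x^2 - 5) - ν * (15/4*x*(th x - th x^3)) := by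
    unfold ef; ring
  have e3 : |ν * (15/2*th x^2 - 5)| ≤ |ν| * (25/2) := by
    rw [abs_mul]
    apply mul_le_mul_of_nonneg_left _ (abs_nonneg ν)
    rw [abs_le]; constructor <;> nlinarith
  have e4 : |ν * (15/4*x*(th x - th x^3))| ≤ |ν| * (15/4) * x := by
    rw [abs_mul]
    have h1 : |15/4*x*(th x - th x^3)| ≤ 15/4*x := by
      rw [abs_mul, abs_of_nonneg (by linarith : (0:ℝ) ≤ 15/4*x)]
      nlinarith [abs_nonneg (th x - th x^3)]
    nlinarith [abs_nonneg ν]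
  have e5 : |ν| * (1 - th x^2)⁻¹
      ≤ |ν * ef x| + |ν| * (25/2) + |ν| * (15/4) * x := by
    have e1 : |ν| * (1 - th x^2)⁻¹ = |ν * (1 - th x^2)⁻¹| := by
      rw [abs_mul, abs_of_pos hinvpos]
    rw [e1, e2]
    have t1 := abs_sub' (ν * ef x - ν * (15/2*th x^2 - 5)) (ν * (15/4*x*(th x - th x^3)))
    have t2 := abs_sub' (ν * ef x) (ν * (15/2*th x^2 - 5))
    linarith
  -- bound on |ν * ef x|
  have hts : th x^2 ≤ 1 := (th_sq_lt_one x).le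
  have m1 : 0 ≤ x*(1 - (th x - th x^3)) := mul_nonneg hx0 (by linarith [hxt.2])
  have m2 : 0 ≤ x*((th x - th x^3) + 1) := mul_nonneg hx0 (by linarith [hxt.1])
  have hPcb : |Pc x| ≤ 2 + 3/2*x := by
    unfold Pc
    rw [abs_le]; constructor <;> nlinarith [m1, m2, hts, sq_nonneg (th x)]
  have hPab : |Pa x| ≤ 3/2 + 9/4*x := by
    unfold Pa
    rw [abs_le]; constructor <;> nlinarith [m1, m2, hts, sq_nonneg (th x)]
  have e6 : |ν * ef x| ≤ C*(1+x)^n + (2*|cst| + 3/2*|a₀|) + (3/2*|cst| + 9/4*|a₀|)*x := by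
    have e0 : ν * ef x = A₀ x - (cst * Pc x + a₀ * Pa x) := by
      have := hAeq x; linarith
    rw [e0]
    have t1 := abs_sub' (A₀ x) (cst * Pc x + a₀ * Pa x)
    have t2 := abs_add_le (cst * Pc x) (a₀ * Pa x)
    have t3 : |cst * Pc x| ≤ |cst| * (2 + 3/2*x) := by
      rw [abs_mul]; exact mul_le_mul_of_nonneg_left hPcb (abs_nonneg cst)
    have t4 : |a₀ * Pa x| ≤ |a₀| * (3/2 + 9/4*x) := by
      rw [abs_mul]; exact mul_le_mul_of_nonneg_left hPab (abs_nonneg a₀)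
    have t5 := hAbound x hx
    nlinarith [abs_nonneg cst, abs_nonneg a₀]
  -- assemble
  have h9 : |ν| * Real.exp x ≤ 4 * (|ν| * (1 - th x^2)⁻¹) := by
    rw [inv_one_sub_th_sq]
    nlinarith [abs_nonneg ν]
  have hone := one_le_pow1x hx n
  have hxp := x_le_pow1x hx hn1
  have p1 : (0:ℝ) ≤ (1+x)^n - 1 := by linarith
  have p2 : (0:ℝ) ≤ (1+x)^n - x := by linarith
  have k1 : (0:ℝ) ≤ 8*|cst| + 6*|a₀| + 50*|ν| := by positivity
  have k2 : (0:ℝ) ≤ 6*|cst| + 9*|a₀| + 15*|ν| := by positivity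
  nlinarith [mul_nonneg k1 p1, mul_nonneg k2 p2, hC.le]

set_option maxHeartbeats 1000000 in
lemma growth_stepB (C cst a₀ μ : ℝ) (n : ℕ) (hC : 0 < C) (hn1 : 1 ≤ n) (hn2 : 2 ≤ n)
  (B₀ : ℝ → ℝ)
  (hBbound : ∀ x : ℝ, 1 ≤ x → |B₀ x| ≤ C * (1+x)^n)
  (hBW : ∀ y, B₀ y = cst*Wc y + a₀*Wa y + μ*dQ y) : cst/2 - 3*a₀/4 = 0 := by
  apply growth_aux (D := 4*C + 12* |μ| + (|cst|/2 + 3* |a₀|/4)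
    + (6* |cst| + 3* |a₀|) + (6* |cst| + 9* |a₀|) + (9/2* |cst| + 27/4* |a₀|)) (n := n)
  intro x hx
  have hx0 : (0:ℝ) ≤ x := by linarith
  have hxt := abs_le.mp (abs_t3_le x)
  have ht := abs_le.mp (th_abs_le x)
  have hts : th x^2 ≤ 1 := (th_sq_lt_one x).le
  have hp : (0:ℝ) ≤ 1 - th x^2 := (one_sub_th_sq_pos x).le
  have hkey : (cst/2 - 3*a₀/4)*(Real.sinh x / 2)
      = B₀ x - μ*dQ x
        - (cst*(-(3/2*th x) + 3/2*x*(1 - th x^2) - 9/8*x^2*(th x - th x^3))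
           + a₀*(-(3/4*th x) - 9/4*x*(1 - th x^2) + 27/16*x^2*(th x - th x^3))) := by
    have h1 := hBW x
    have h2 := th_inv_eq_sinh x
    rw [← h2]
    unfold Wc Wa at h1
    linear_combination -h1
  have hsh : 0 ≤ Real.sinh x := Real.sinh_nonneg_iff.mpr hx0
  -- bounds on the bounded pieces
  have m1 : 0 ≤ x^2*(1 - (th x - th x^3)) := mul_nonneg (sq_nonneg x) (by linarith [hxt.2])
  have m2 : 0 ≤ x^2*((th x - th x^3) + 1) := mul_nonneg (sq_nonneg x) (by linarith [hxt.1])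
  have m3 : 0 ≤ x*(1 - th x^2) := mul_nonneg hx0 hp
  have m4 : 0 ≤ x*(th x^2) := mul_nonneg hx0 (sq_nonneg _)
  have hRc : |(-(3/2*th x) + 3/2*x*(1 - th x^2) - 9/8*x^2*(th x - th x^3))|
      ≤ 3/2 + 3/2*x + 9/8*x^2 := by
    rw [abs_le]; constructor <;> nlinarith [m1, m2, m3, m4, ht.1, ht.2]
  have hRa : |(-(3/4*th x) - 9/4*x*(1 - th x^2) + 27/16*x^2*(th x - th x^3))|
      ≤ 3/4 + 9/4*x + 27/16*x^2 := by
    rw [abs_le]; constructor <;> nlinarith [m1, m2, m3, m4, ht.1, ht.2]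
  have hμb : |μ*dQ x| ≤ 3* |μ| := by
    rw [abs_mul]
    nlinarith [abs_dQ_le x, abs_nonneg μ, abs_nonneg (dQ x)]
  have hb1 : |cst/2 - 3*a₀/4| * (Real.sinh x / 2)
      ≤ |B₀ x| + 3* |μ| + |cst| *(3/2 + 3/2*x + 9/8*x^2) + |a₀| *(3/4 + 9/4*x + 27/16*x^2) := by
    have e1 : |cst/2 - 3*a₀/4| * (Real.sinh x / 2)
        = |(cst/2 - 3*a₀/4)*(Real.sinh x / 2)| := by
      rw [abs_mul, abs_of_nonneg (by linarith : (0:ℝ) ≤ Real.sinh x / 2)]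
    rw [e1, hkey]
    have t1 := abs_sub' (B₀ x - μ*dQ x)
      (cst*(-(3/2*th x) + 3/2*x*(1 - th x^2) - 9/8*x^2*(th x - th x^3))
        + a₀*(-(3/4*th x) - 9/4*x*(1 - th x^2) + 27/16*x^2*(th x - th x^3)))
    have t2 := abs_sub' (B₀ x) (μ*dQ x)
    have t3 := abs_add_le (cst*(-(3/2*th x) + 3/2*x*(1 - th x^2) - 9/8*x^2*(th x - th x^3)))
      (a₀*(-(3/4*th x) - 9/4*x*(1 - th x^2) + 27/16*x^2*(th x - th x^3)))
    have t4 : |cst*(-(3/2*th x) + 3/2*x*(1 - th x^2) - 9/8*x^2*(th x - th x^3))|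
        ≤ |cst| *(3/2 + 3/2*x + 9/8*x^2) := by
      rw [abs_mul]; exact mul_le_mul_of_nonneg_left hRc (abs_nonneg cst)
    have t5 : |a₀*(-(3/4*th x) - 9/4*x*(1 - th x^2) + 27/16*x^2*(th x - th x^3))|
        ≤ |a₀| *(3/4 + 9/4*x + 27/16*x^2) := by
      rw [abs_mul]; exact mul_le_mul_of_nonneg_left hRa (abs_nonneg a₀)
    linarith
  -- convert to exponential lower bound
  have hsge := sinh_ge hx0
  have hexp : |cst/2 - 3*a₀/4| * Real.exp x
      ≤ 4*(|cst/2 - 3*a₀/4| * (Real.sinh x / 2)) + |cst/2 - 3*a₀/4| := by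
    nlinarith [abs_nonneg (cst/2 - 3*a₀/4)]
  have hone := one_le_pow1x hx n
  have hxp := x_le_pow1x hx hn1
  have hxsq := xsq_le_pow1x hx hn2
  have hBb := hBbound x hx
  have p1 : (0:ℝ) ≤ (1+x)^n - 1 := by linarith
  have p2 : (0:ℝ) ≤ (1+x)^n - x := by linarith
  have p3 : (0:ℝ) ≤ (1+x)^n - x^2 := by linarith
  have habs0 : |cst/2 - 3*a₀/4| ≤ |cst|/2 + 3* |a₀|/4 := by
    have := abs_sub' (cst/2) (3*a₀/4)
    have e1 : |cst/2| = |cst|/2 := by rw [abs_div]; norm_num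
    have e2 : |3*a₀/4| = 3* |a₀|/4 := by rw [abs_div, abs_mul]; norm_num
    linarith
  have k1 : (0:ℝ) ≤ 12* |μ| + (|cst|/2 + 3* |a₀|/4) + 6* |cst| + 3* |a₀| := by positivity
  have k2 : (0:ℝ) ≤ 6* |cst| + 9* |a₀| := by positivity
  have k3 : (0:ℝ) ≤ 9/2* |cst| + 27/4* |a₀| := by positivity
  nlinarith [mul_nonneg k1 p1, mul_nonneg k2 p2, mul_nonneg k3 p3, hC.le]

set_option maxHeartbeats 2000000 in
theorem homogeneous_system_solutions_p2 (a₀ : ℝ) (A₀ B₀ : ℝ → ℝ)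
    (hA : ContDiff ℝ (⊤ : ℕ∞) A₀) (hB : ContDiff ℝ (⊤ : ℕ∞) B₀)
    (hAeven : ∀ x : ℝ, A₀ (-x) = A₀ x) (hBodd : ∀ x : ℝ, B₀ (-x) = -B₀ x)
    (hgrowth : ∃ C m : ℝ, 0 < C ∧ 0 < m ∧
      ∀ x : ℝ, |A₀ x| + |B₀ x| ≤ C * (1 + |x|) ^ m)
    (hsol : SolvesOmega0 a₀ A₀ B₀) :
    (∃ γ δ : ℝ, a₀ = 2 / 3 * γ ∧
      (∀ x : ℝ, A₀ x = γ * (1 - 4 / 3 * Q2 x)) ∧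
      (∀ x : ℝ, B₀ x = -2 * γ * phi2 x + δ * deriv Q2 x)) ∧
    (∀ γ δ : ℝ, SolvesOmega0 (2 / 3 * γ)
      (fun x => γ * (1 - 4 / 3 * Q2 x))
      (fun x => -2 * γ * phi2 x + δ * deriv Q2 x)) := by
  refine ⟨?_, fun γ δ => converse_part γ δ⟩
  obtain ⟨hs1, hs2⟩ := hsol
  obtain ⟨C, m, hC, hm, hgr⟩ := hgrowth
  -- basic differentiability
  have hQd : Differentiable ℝ Q2 := fun y => (hasDerivAt_Q2 y).differentiableAt
  have hAi : ContDiff ℝ (⊤ : ℕ∞) A₀ := hA.of_le (by simp)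
  have hBi : ContDiff ℝ (⊤ : ℕ∞) B₀ := hB.of_le (by simp)
  have hA1 : ContDiff ℝ (⊤ : ℕ∞) (deriv A₀) := (contDiff_infty_iff_deriv.mp hAi).2
  have hB1 : ContDiff ℝ (⊤ : ℕ∞) (deriv B₀) := (contDiff_infty_iff_deriv.mp hBi).2
  have hdA : Differentiable ℝ A₀ := hAi.differentiable (by simp)
  have hdB : Differentiable ℝ B₀ := hBi.differentiable (by simp)
  have hdA1 : Differentiable ℝ (deriv A₀) := hA1.differentiable (by simp)
  have hdB1 : Differentiable ℝ (deriv B₀) := hB1.differentiable (by simp)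
  have hdA2 : Differentiable ℝ (deriv (deriv A₀)) :=
    ((contDiff_infty_iff_deriv.mp hA1).2).differentiable (by simp)
  have hdB2 : Differentiable ℝ (deriv (deriv B₀)) :=
    ((contDiff_infty_iff_deriv.mp hB1).2).differentiable (by simp)
  -- growth with natural exponent
  set n : ℕ := ⌈m⌉₊ + 2 with hn_def
  have hn1 : 1 ≤ n := by omega
  have hn2 : 2 ≤ n := by omega
  have hbound : ∀ x : ℝ, 1 ≤ x → |A₀ x| + |B₀ x| ≤ C * (1+x)^n := by
    intro x hx
    have h1 := hgr x
    rw [abs_of_nonneg (by linarith : (0:ℝ) ≤ x)] at h1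
    have h2 : (1+x) ^ m ≤ (1+x) ^ (n : ℝ) := by
      apply Real.rpow_le_rpow_of_exponent_le (by linarith)
      have := Nat.le_ceil m
      rw [hn_def]
      push_cast
      linarith
    have h3 : (1+x) ^ (n:ℝ) = (1+x)^n := Real.rpow_natCast _ n
    calc |A₀ x| + |B₀ x| ≤ C * (1+x)^m := h1
      _ ≤ C * (1+x)^(n:ℝ) := by nlinarith
      _ = C * (1+x)^n := by rw [h3]
  have hAbound : ∀ x : ℝ, 1 ≤ x → |A₀ x| ≤ C * (1+x)^n := fun x hx => by
    have := hbound x hx; have := abs_nonneg (B₀ x); linarith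
  have hBbound : ∀ x : ℝ, 1 ≤ x → |B₀ x| ≤ C * (1+x)^n := fun x hx => by
    have := hbound x hx; have := abs_nonneg (A₀ x); linarith
  -- ========================= STEP A =========================
  have hgdiff : Differentiable ℝ (fun z => 3 * Q2 z - 2 * Q2 z ^ 2) :=
    (hQd.const_mul 3).sub ((hQd.pow 2).const_mul 2)
  have hLopA : Lop2 A₀ = fun y => -deriv (deriv A₀) y + A₀ y - 2 * Q2 y * A₀ y := rfl
  have hdiffLA : Differentiable ℝ (Lop2 A₀) := by
    rw [hLopA]
    exact (hdA2.neg.add hdA).sub ((hQd.const_mul 2).mul hdA)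
  have hFdiff : Differentiable ℝ (fun z => Lop2 A₀ z + a₀ * (3 * Q2 z - 2 * Q2 z ^ 2)) :=
    hdiffLA.add (hgdiff.const_mul a₀)
  have hFzero : ∀ y, deriv (fun z => Lop2 A₀ z + a₀ * (3 * Q2 z - 2 * Q2 z ^ 2)) y = 0 := by
    intro y
    rw [deriv_fun_add (hdiffLA y) ((hgdiff y).const_mul a₀), deriv_const_mul a₀ (hgdiff y)]
    exact hs1 y
  have hconst : ∀ y, Lop2 A₀ y + a₀ * (3 * Q2 y - 2 * Q2 y ^ 2)
      = Lop2 A₀ 0 + a₀ * (3 * Q2 0 - 2 * Q2 0 ^ 2) :=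
    fun y => is_const_of_deriv_eq_zero hFdiff hFzero y 0
  set cst : ℝ := Lop2 A₀ 0 + a₀ * (3 * Q2 0 - 2 * Q2 0 ^ 2) with hcst_def
  have hA2eq : ∀ y, deriv (deriv A₀) y
      = (1 - 2 * Q2 y) * A₀ y + a₀ * (3 * Q2 y - 2 * Q2 y ^ 2) - cst := by
    intro y
    have h1 := hconst y
    simp only [Lop2] at h1
    linear_combination -h1
  set ν : ℝ := (A₀ 0 - (cst * Pc 0 + a₀ * Pa 0)) / (-4) with hν_def
  have hAeq : ∀ y, A₀ y = cst * Pc y + a₀ * Pa y + ν * ef y := by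
    have hw : ∀ y, HasDerivAt
        (fun z => A₀ z - (cst * Pc z + a₀ * Pa z + ν * ef z))
        (deriv A₀ y - (cst * dPc y + a₀ * dPa y + ν * def' y)) y := by
      intro y
      exact (hdA y).hasDerivAt.sub
        ((((hasDerivAt_Pc y).const_mul cst).add ((hasDerivAt_Pa y).const_mul a₀)).add
          ((hasDerivAt_ef y).const_mul ν))
    have hw' : ∀ y, HasDerivAt
        (fun z => deriv A₀ z - (cst * dPc z + a₀ * dPa z + ν * def' z))
        ((1 - 2 * Q2 y) * (A₀ y - (cst * Pc y + a₀ * Pa y + ν * ef y))) y := by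
      intro y
      have h1 : HasDerivAt (deriv A₀)
          ((1 - 2 * Q2 y) * A₀ y + a₀ * (3 * Q2 y - 2 * Q2 y ^ 2) - cst) y := by
        have := (hdA1 y).hasDerivAt
        rwa [hA2eq y] at this
      have h2 := h1.sub
        ((((hasDerivAt_dPc y).const_mul cst).add ((hasDerivAt_dPa y).const_mul a₀)).add
          ((hasDerivAt_def' y).const_mul ν))
      refine h2.congr_deriv ?_
      ring
    have h0 : A₀ 0 - (cst * Pc 0 + a₀ * Pa 0 + ν * ef 0) = 0 := by
      rw [ef_zero, hν_def]
      field_simp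
      ring
    have h0' : deriv A₀ 0 - (cst * dPc 0 + a₀ * dPa 0 + ν * def' 0) = 0 := by
      rw [dPc_zero, dPa_zero, def'_zero, even_deriv_zero hAeven]
      ring
    have := ode_unique _ _ hw hw' h0 h0'
    intro y
    have hy := this y
    linarith [hy]
  -- growth: ν = 0
  have hν0 : ν = 0 := growth_stepA C cst a₀ ν n hC hn1 A₀ hAbound hAeq
  have hAP : ∀ y, A₀ y = cst * Pc y + a₀ * Pa y := by
    intro y
    have h := hAeq y
    rw [hν0] at h
    linarith [h]
  -- ========================= STEP B =========================
  have hLopB : Lop2 B₀ = fun y => -deriv (deriv B₀) y + B₀ y - 2 * Q2 y * B₀ y := rfl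
  have hdiffLB : Differentiable ℝ (Lop2 B₀) := by
    rw [hLopB]
    exact (hdB2.neg.add hdB).sub ((hQd.const_mul 2).mul hdB)
  have hGd : ∀ y, HasDerivAt (fun z => cst * Gc z + a₀ * Ga z)
      (cst*(3*((1 - 2*Q2 y)*Pc y - 1) + 2*Q2 y*Pc y)
       + a₀*(-3*ddQ y + 3*((1 - 2*Q2 y)*Pa y - (-3*Q2 y + 2*Q2 y^2)) + 2*Q2 y*Pa y)) y :=
    fun y => ((hasDerivAt_Gc y).const_mul cst).add ((hasDerivAt_Ga y).const_mul a₀)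
  have hGdiff : Differentiable ℝ (fun z => cst * Gc z + a₀ * Ga z) :=
    fun y => (hGd y).differentiableAt
  have hPhiZero : ∀ y, deriv (fun z => Lop2 B₀ z - (cst * Gc z + a₀ * Ga z)) y = 0 := by
    intro y
    rw [deriv_fun_sub (hdiffLB y) (hGdiff y), (hGd y).deriv]
    have h2 := hs2 y
    rw [deriv_Q2_eq, (hasDerivAt_dQ y).deriv, hA2eq y, hAP y] at h2
    linear_combination h2
  have hPhiconst : ∀ y, Lop2 B₀ y - (cst*Gc y + a₀*Ga y)
      = Lop2 B₀ 0 - (cst*Gc 0 + a₀*Ga 0) :=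
    fun y => is_const_of_deriv_eq_zero (hdiffLB.sub hGdiff) hPhiZero y 0
  have hB00 : B₀ 0 = 0 := by have := hBodd 0; simp at this; linarith
  have hB1even : ∀ y, deriv B₀ (-y) = deriv B₀ y := odd_deriv_even hBodd
  have hB20 : deriv (deriv B₀) 0 = 0 := by
    have := even_deriv_neg hB1even 0
    simp at this
    linarith
  have hLB0 : Lop2 B₀ 0 = 0 := by simp only [Lop2, hB00, hB20]; ring
  have hLBeq : ∀ y, Lop2 B₀ y = cst*Gc y + a₀*Ga y := by
    intro y
    have h := hPhiconst y
    rw [hLB0, Gc_zero, Ga_zero] at h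
    linarith [h]
  have hB2eq : ∀ y, deriv (deriv B₀) y = (1 - 2*Q2 y)*B₀ y - (cst*Gc y + a₀*Ga y) := by
    intro y
    have h1 := hLBeq y
    simp only [Lop2] at h1
    linear_combination -h1
  set μ : ℝ := (deriv B₀ 0 - (cst * dWc 0 + a₀ * dWa 0)) * (-4/3) with hμ_def
  have hBW : ∀ y, B₀ y = cst*Wc y + a₀*Wa y + μ*dQ y := by
    have hw : ∀ y, HasDerivAt (fun z => B₀ z - (cst*Wc z + a₀*Wa z + μ*dQ z))
        (deriv B₀ y - (cst*dWc y + a₀*dWa y + μ*ddQ y)) y := by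
      intro y
      exact (hdB y).hasDerivAt.sub
        ((((hasDerivAt_Wc y).const_mul cst).add ((hasDerivAt_Wa y).const_mul a₀)).add
          ((hasDerivAt_dQ y).const_mul μ))
    have hw' : ∀ y, HasDerivAt (fun z => deriv B₀ z - (cst*dWc z + a₀*dWa z + μ*ddQ z))
        ((1 - 2*Q2 y) * (B₀ y - (cst*Wc y + a₀*Wa y + μ*dQ y))) y := by
      intro y
      have h1 : HasDerivAt (deriv B₀) ((1 - 2*Q2 y)*B₀ y - (cst*Gc y + a₀*Ga y)) y := by
        have := (hdB1 y).hasDerivAt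
        rwa [hB2eq y] at this
      have hdd : HasDerivAt ddQ ((1 - 2*Q2 y)*dQ y) y := by
        have := hasDerivAt_ddQ y
        rwa [dddQ_eq y] at this
      have h2 := h1.sub
        ((((hasDerivAt_dWc y).const_mul cst).add ((hasDerivAt_dWa y).const_mul a₀)).add
          (hdd.const_mul μ))
      refine h2.congr_deriv ?_
      ring
    have h0 : B₀ 0 - (cst*Wc 0 + a₀*Wa 0 + μ*dQ 0) = 0 := by
      rw [hB00, Wc_zero, Wa_zero, dQ_zero]; ring
    have h0' : deriv B₀ 0 - (cst*dWc 0 + a₀*dWa 0 + μ*ddQ 0) = 0 := by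
      rw [ddQ_zero, hμ_def]; ring
    have hzero := ode_unique _ _ hw hw' h0 h0'
    intro y
    have hy := hzero y
    linarith [hy]
  -- growth: the resonance coefficient vanishes
  have hκ : cst/2 - 3*a₀/4 = 0 := growth_stepB C cst a₀ μ n hC hn1 hn2 B₀ hBbound hBW
  -- ========================= conclusion =========================
  have ha : a₀ = 2/3*cst := by linarith
  refine ⟨cst, μ, by linarith, ?_, ?_⟩
  · intro x
    rw [hAP x, ha, Q2_eq]
    unfold Pc Pa
    ring
  · intro x
    rw [hBW x, ha, deriv_Q2_eq]
    simp only [phi2_eq_th]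
    unfold Wc Wa
    ring
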